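/- Generation lemma for record merge: let σ be a type with ω ≰ σ (equivalently, σ is not equal to ω up to mutual subtyping). Then Γ ⊢ M ⊕ R : σ is derivable if and only if there exist record types ρ₁, ρ₂ ∈ 𝕋_R such that Γ ⊢ M : ρ₁ and Γ ⊢ R : ρ₂ are derivable, lbl(R) = lbl(ρ₂), and ρ₁+ρ₂ ≤ σ. -/

import Mathlib

/-- Terms of the record calculus `Λ_R`, with de Bruijn indices for bound variables
(so that terms are identified up to α-conversion) and labels drawn from `ℕ`.
Records are finite lists of label/term pairs; in `merge M fs` the right operand
is syntactically a record. -/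
inductive Tm where
  | var : Nat → Tm
  | lam : Tm → Tm
  | app : Tm → Tm → Tm
  | sel : Tm → Nat → Tm
  | rcd : List (Nat × Tm) → Tm
  | merge : Tm → List (Nat × Tm) → Tm

namespace Tm

/-- The list of field labels of a record. -/
def keys (fs : List (Nat × Tm)) : List Nat := fs.map Prod.fst

/-- The set of field labels `lbl(R)` of a record. -/
def lblR (fs : List (Nat × Tm)) : Finset Nat := (keys fs).toFinset

/-- Record merge on field lists: fields of the first record whose label does not
occur in the second record, followed by all fields of the second record. -/
def mergeFields (fs gs : List (Nat × Tm)) : List (Nat × Tm) :=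
  fs.filter (fun p => decide (p.1 ∉ keys gs)) ++ gs

end Tm
/-- Intersection and record types `𝕋`. Record types are the types satisfying `IsRec`. -/
inductive Ty where
  | const : Nat → Ty
  | omega : Ty
  | arrow : Ty → Ty → Ty
  | inter : Ty → Ty → Ty
  | empty : Ty
  | fld : Nat → Ty → Ty
  | merge : Ty → Ty → Ty
deriving DecidableEq

/-- The record types `𝕋_R ⊆ 𝕋`. -/
inductive IsRec : Ty → Prop where
  | empty : IsRec .empty
  | fld (l : Nat) (σ : Ty) : IsRec (.fld l σ)
  | merge {ρ₁ ρ₂ : Ty} : IsRec ρ₁ → IsRec ρ₂ → IsRec (.merge ρ₁ ρ₂)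
  | inter {ρ₁ ρ₂ : Ty} : IsRec ρ₁ → IsRec ρ₂ → IsRec (.inter ρ₁ ρ₂)

/-- Subtyping on `𝕋`: the least preorder satisfying the BCD axioms together with
the record and record-merge axioms. -/
inductive TySub : Ty → Ty → Prop where
  | refl (σ : Ty) : TySub σ σ
  | trans {σ τ υ : Ty} : TySub σ τ → TySub τ υ → TySub σ υ
  | le_omega (σ : Ty) : TySub σ .omega
  | omega_arrow : TySub .omega (.arrow .omega .omega)
  | inter_left (σ τ : Ty) : TySub (.inter σ τ) σ
  | inter_right (σ τ : Ty) : TySub (.inter σ τ) τ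
  | le_inter {σ τ₁ τ₂ : Ty} : TySub σ τ₁ → TySub σ τ₂ → TySub σ (.inter τ₁ τ₂)
  | arrow_inter (σ τ₁ τ₂ : Ty) :
      TySub (.inter (.arrow σ τ₁) (.arrow σ τ₂)) (.arrow σ (.inter τ₁ τ₂))
  | arrow_mono {σ₁ σ₂ τ₁ τ₂ : Ty} : TySub σ₂ σ₁ → TySub τ₁ τ₂ →
      TySub (.arrow σ₁ τ₁) (.arrow σ₂ τ₂)
  | fld_empty (l : Nat) (σ : Ty) : TySub (.fld l σ) .empty
  | fld_inter (l : Nat) (σ τ : Ty) :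
      TySub (.inter (.fld l σ) (.fld l τ)) (.fld l (.inter σ τ))
  | fld_mono {σ τ : Ty} (l : Nat) : TySub σ τ → TySub (.fld l σ) (.fld l τ)
  | merge_empty_r {ρ : Ty} : IsRec ρ → TySub (.merge ρ .empty) ρ
  | merge_empty_r' {ρ : Ty} : IsRec ρ → TySub ρ (.merge ρ .empty)
  | merge_empty_l {ρ : Ty} : IsRec ρ → TySub (.merge .empty ρ) ρ
  | merge_empty_l' {ρ : Ty} : IsRec ρ → TySub ρ (.merge .empty ρ)
  | merge_assoc {ρ₁ ρ₂ ρ₃ : Ty} : IsRec ρ₁ → IsRec ρ₂ → IsRec ρ₃ →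
      TySub (.merge (.merge ρ₁ ρ₂) ρ₃) (.merge ρ₁ (.merge ρ₂ ρ₃))
  | merge_assoc' {ρ₁ ρ₂ ρ₃ : Ty} : IsRec ρ₁ → IsRec ρ₂ → IsRec ρ₃ →
      TySub (.merge ρ₁ (.merge ρ₂ ρ₃)) (.merge (.merge ρ₁ ρ₂) ρ₃)
  | merge_inter {ρ₁ ρ₂ ρ₃ : Ty} : IsRec ρ₁ → IsRec ρ₂ → IsRec ρ₃ →
      TySub (.merge (.inter ρ₁ ρ₂) ρ₃) (.inter (.merge ρ₁ ρ₃) (.merge ρ₂ ρ₃))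
  | merge_inter' {ρ₁ ρ₂ ρ₃ : Ty} : IsRec ρ₁ → IsRec ρ₂ → IsRec ρ₃ →
      TySub (.inter (.merge ρ₁ ρ₃) (.merge ρ₂ ρ₃)) (.merge (.inter ρ₁ ρ₂) ρ₃)
  | fld_absorb {ρ : Ty} (l : Nat) (σ τ : Ty) : IsRec ρ →
      TySub (.merge (.fld l σ) (.inter (.fld l τ) ρ)) (.inter (.fld l τ) ρ)
  | fld_absorb' {ρ : Ty} (l : Nat) (σ τ : Ty) : IsRec ρ →
      TySub (.inter (.fld l τ) ρ) (.merge (.fld l σ) (.inter (.fld l τ) ρ))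
  | fld_comm {ρ : Ty} {l l' : Nat} (σ τ : Ty) : l ≠ l' → IsRec ρ →
      TySub (.merge (.fld l σ) (.inter (.fld l' τ) ρ))
          (.inter (.fld l' τ) (.merge (.fld l σ) ρ))
  | fld_comm' {ρ : Ty} {l l' : Nat} (σ τ : Ty) : l ≠ l' → IsRec ρ →
      TySub (.inter (.fld l' τ) (.merge (.fld l σ) ρ))
          (.merge (.fld l σ) (.inter (.fld l' τ) ρ))
  | merge_mono_l {ρ₁ ρ₂ ρ : Ty} : IsRec ρ₁ → IsRec ρ₂ → IsRec ρ →
      TySub ρ₁ ρ₂ → TySub (.merge ρ₁ ρ) (.merge ρ₂ ρ)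
  | merge_congr_r {ρ ρ₁ ρ₂ : Ty} : IsRec ρ → IsRec ρ₁ → IsRec ρ₂ →
      TySub ρ₁ ρ₂ → TySub ρ₂ ρ₁ → TySub (.merge ρ ρ₁) (.merge ρ ρ₂)

/-- Type equality: mutual subtyping. -/
def TyEq (σ τ : Ty) : Prop := TySub σ τ ∧ TySub τ σ
/-- The label map on record types. -/
def lbl : Ty → Finset Nat
  | .const _ => ∅
  | .omega => ∅
  | .arrow _ _ => ∅
  | .empty => ∅
  | .fld l _ => {l}
  | .inter ρ₁ ρ₂ => lbl ρ₁ ∪ lbl ρ₂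
  | .merge ρ₁ ρ₂ => lbl ρ₁ ∪ lbl ρ₂
/-- The type assignment system for `Λ_R`. With de Bruijn indices, a basis `Γ` is a
list of types, extension `Γ, x:σ` is `σ :: Γ`, and the axiom rule looks up the
type of a variable index in `Γ`. -/
inductive Typing : List Ty → Tm → Ty → Prop where
  | var {Γ : List Ty} {x : Nat} {σ : Ty} :
      Γ[x]? = some σ → Typing Γ (.var x) σ
  | lam {Γ : List Ty} {M : Tm} {σ τ : Ty} :
      Typing (σ :: Γ) M τ → Typing Γ (.lam M) (.arrow σ τ)
  | app {Γ : List Ty} {M N : Tm} {σ τ : Ty} :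
      Typing Γ M (.arrow σ τ) → Typing Γ N σ → Typing Γ (.app M N) τ
  | inter {Γ : List Ty} {M : Tm} {σ τ : Ty} :
      Typing Γ M σ → Typing Γ M τ → Typing Γ M (.inter σ τ)
  | omega {Γ : List Ty} (M : Tm) : Typing Γ M .omega
  | sub {Γ : List Ty} {M : Tm} {σ τ : Ty} :
      Typing Γ M σ → TySub σ τ → Typing Γ M τ
  | empty {Γ : List Ty} (fs : List (Nat × Tm)) : Typing Γ (.rcd fs) .empty
  | rcd {Γ : List Ty} {fs : List (Nat × Tm)} {l : Nat} {M : Tm} {σ : Ty} :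
      List.lookup l fs = some M → Typing Γ M σ → Typing Γ (.rcd fs) (.fld l σ)
  | sel {Γ : List Ty} {M : Tm} {l : Nat} {σ : Ty} :
      Typing Γ M (.fld l σ) → Typing Γ (.sel M l) σ
  | merge {Γ : List Ty} {M : Tm} {fs : List (Nat × Tm)} {ρ₁ ρ₂ : Ty} :
      Typing Γ M ρ₁ → Typing Γ (.rcd fs) ρ₂ → IsRec ρ₁ → IsRec ρ₂ →
      Tm.lblR fs = lbl ρ₂ → Typing Γ (.merge M fs) (.merge ρ₁ ρ₂)

/-!
Every record type equals an intersection of fields `⟨l₁:σ₁⟩ ∩ ⋯ ∩ ⟨lₙ:σₙ⟩ ∩ ⟨⟩`, and on such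
normal forms the merge axioms compute `ρ + τ` as the fields of `ρ` whose labels are not in
`lbl τ`, intersected with `τ`. Consequently `ρ + τ ≤ ρ + τ'` whenever `τ ≤ τ'` and
`lbl τ = lbl τ'`. This makes the types `σ ≥ ρ₁ + ρ₂`, with `M : ρ₁`, `R : ρ₂` and
`lbl R = lbl ρ₂`, closed under intersection (use `ρ₁ ∩ ρ₁'` and `ρ₂ ∩ ρ₂'`) as well as under
subtyping, so by induction on derivations every type of `M ⊕ R` is of this form or lies above `ω`.
-/

theorem TyEq.refl (σ : Ty) : TyEq σ σ := ⟨.refl σ, .refl σ⟩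

theorem TyEq.symm {σ τ : Ty} (h : TyEq σ τ) : TyEq τ σ := ⟨h.2, h.1⟩

theorem TyEq.trans {σ τ υ : Ty} (h : TyEq σ τ) (h' : TyEq τ υ) : TyEq σ υ :=
  ⟨h.1.trans h'.1, h'.2.trans h.2⟩

theorem TySub.inter_mono {σ σ' τ τ' : Ty} (h : TySub σ σ') (h' : TySub τ τ') :
    TySub (.inter σ τ) (.inter σ' τ') :=
  .le_inter ((TySub.inter_left σ τ).trans h) ((TySub.inter_right σ τ).trans h')

theorem TyEq.inter_congr {σ σ' τ τ' : Ty} (h : TyEq σ σ') (h' : TyEq τ τ') :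
    TyEq (.inter σ τ) (.inter σ' τ') :=
  ⟨h.1.inter_mono h'.1, h.2.inter_mono h'.2⟩

theorem TyEq.merge_congr {ρ ρ' τ τ' : Ty} (hρ : IsRec ρ) (hρ' : IsRec ρ') (hτ : IsRec τ)
    (hτ' : IsRec τ') (h : TyEq ρ ρ') (h' : TyEq τ τ') :
    TyEq (.merge ρ τ) (.merge ρ' τ') :=
  ⟨(TySub.merge_mono_l hρ hρ' hτ h.1).trans (.merge_congr_r hρ' hτ hτ' h'.1 h'.2),
    (TySub.merge_mono_l hρ' hρ hτ' h.2).trans (.merge_congr_r hρ hτ' hτ h'.2 h'.1)⟩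

theorem TyEq.inter_eq_right {σ τ : Ty} (h : TySub τ σ) : TyEq (.inter σ τ) τ :=
  ⟨.inter_right σ τ, .le_inter h (.refl τ)⟩

theorem TyEq.inter_left_comm (σ τ υ : Ty) :
    TyEq (.inter σ (.inter τ υ)) (.inter τ (.inter σ υ)) := by
  constructor <;>
    exact .le_inter ((TySub.inter_right _ _).trans (.inter_left _ _))
      (.le_inter (.inter_left _ _) ((TySub.inter_right _ _).trans (.inter_right _ _)))

namespace Ty

def ofFields : List (Nat × Ty) → Ty
  | [] => .empty
  | p :: fs => .inter (.fld p.1 p.2) (ofFields fs)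

def mergeFields (fs gs : List (Nat × Ty)) : List (Nat × Ty) :=
  fs.filter (fun p => decide (p.1 ∉ gs.map Prod.fst)) ++ gs

theorem isRec_ofFields (fs : List (Nat × Ty)) : IsRec (ofFields fs) := by
  induction fs with
  | nil => exact .empty
  | cons p fs ih => exact .inter (.fld p.1 p.2) ih

theorem ofFields_le_empty : ∀ fs : List (Nat × Ty), TySub (ofFields fs) .empty
  | [] => .refl _
  | p :: _ => (TySub.inter_left _ _).trans (.fld_empty p.1 p.2)

theorem ofFields_singleton (l : Nat) (σ : Ty) : TyEq (ofFields [(l, σ)]) (.fld l σ) :=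
  ⟨.inter_left _ _, .le_inter (.refl _) (.fld_empty l σ)⟩

theorem ofFields_append_le_left (fs gs : List (Nat × Ty)) :
    TySub (ofFields (fs ++ gs)) (ofFields fs) := by
  induction fs with
  | nil => exact ofFields_le_empty gs
  | cons p fs ih => exact (TySub.refl _).inter_mono ih

theorem ofFields_append_le_right (fs gs : List (Nat × Ty)) :
    TySub (ofFields (fs ++ gs)) (ofFields gs) := by
  induction fs with
  | nil => exact .refl _
  | cons p fs ih => exact (TySub.inter_right _ _).trans ih

theorem ofFields_append (fs gs : List (Nat × Ty)) :
    TyEq (ofFields (fs ++ gs)) (.inter (ofFields fs) (ofFields gs)) := by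
  refine ⟨.le_inter (ofFields_append_le_left fs gs) (ofFields_append_le_right fs gs), ?_⟩
  induction fs with
  | nil => exact .inter_right _ _
  | cons p fs ih =>
    exact .le_inter ((TySub.inter_left _ _).trans (.inter_left _ _))
      (((TySub.inter_right _ _).inter_mono (.refl _)).trans ih)

theorem merge_fld_ofFields_of_mem {l : Nat} (σ : Ty) {gs : List (Nat × Ty)}
    (h : l ∈ gs.map Prod.fst) : TyEq (.merge (.fld l σ) (ofFields gs)) (ofFields gs) := by
  induction gs with
  | nil => simp at h
  | cons p gs ih =>
    rcases eq_or_ne l p.1 with rfl | hne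
    · exact ⟨.fld_absorb p.1 σ p.2 (isRec_ofFields gs),
        .fld_absorb' p.1 σ p.2 (isRec_ofFields gs)⟩
    · have hgs : l ∈ gs.map Prod.fst := by
        simp only [List.map_cons, List.mem_cons, hne, false_or] at h
        exact h
      exact TyEq.trans ⟨.fld_comm σ p.2 hne (isRec_ofFields gs),
        .fld_comm' σ p.2 hne (isRec_ofFields gs)⟩ ((TyEq.refl _).inter_congr (ih hgs))

theorem merge_fld_ofFields_of_not_mem {l : Nat} (σ : Ty) {gs : List (Nat × Ty)}
    (h : l ∉ gs.map Prod.fst) :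
    TyEq (.merge (.fld l σ) (ofFields gs)) (.inter (.fld l σ) (ofFields gs)) := by
  induction gs with
  | nil =>
    exact TyEq.trans ⟨.merge_empty_r (.fld l σ), .merge_empty_r' (.fld l σ)⟩
      (ofFields_singleton l σ).symm
  | cons p gs ih =>
    simp only [List.map_cons, List.mem_cons, not_or] at h
    exact (TyEq.trans ⟨.fld_comm σ p.2 h.1 (isRec_ofFields gs),
        .fld_comm' σ p.2 h.1 (isRec_ofFields gs)⟩ ((TyEq.refl _).inter_congr (ih h.2))).trans
      (TyEq.inter_left_comm _ _ _)

theorem merge_ofFields (fs gs : List (Nat × Ty)) :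
    TyEq (.merge (ofFields fs) (ofFields gs)) (ofFields (mergeFields fs gs)) := by
  induction fs with
  | nil => exact ⟨.merge_empty_l (isRec_ofFields gs), .merge_empty_l' (isRec_ofFields gs)⟩
  | cons p fs ih =>
    have hdistrib : TyEq (.merge (ofFields (p :: fs)) (ofFields gs))
        (.inter (.merge (.fld p.1 p.2) (ofFields gs)) (.merge (ofFields fs) (ofFields gs))) :=
      ⟨.merge_inter (.fld p.1 p.2) (isRec_ofFields fs) (isRec_ofFields gs),
        .merge_inter' (.fld p.1 p.2) (isRec_ofFields fs) (isRec_ofFields gs)⟩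
    have hle : TySub (ofFields (mergeFields fs gs)) (ofFields gs) :=
      ofFields_append_le_right _ _
    by_cases hp : p.1 ∈ gs.map Prod.fst
    · have hfs : mergeFields (p :: fs) gs = mergeFields fs gs := by
        simp [mergeFields, hp]
      rw [hfs]
      exact (hdistrib.trans ((merge_fld_ofFields_of_mem p.2 hp).inter_congr ih)).trans
        (TyEq.inter_eq_right hle)
    · have hfs : mergeFields (p :: fs) gs = p :: mergeFields fs gs := by
        simp [mergeFields, hp]
      rw [hfs]
      refine (hdistrib.trans ((merge_fld_ofFields_of_not_mem p.2 hp).inter_congr ih)).trans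
        ⟨(TySub.inter_left _ _).inter_mono (.refl _), ?_⟩
      exact .le_inter (.le_inter (.inter_left _ _) ((TySub.inter_right _ _).trans hle))
        (.inter_right _ _)

theorem exists_ofFields {ρ : Ty} (hρ : IsRec ρ) :
    ∃ fs : List (Nat × Ty), TyEq ρ (ofFields fs) ∧ lbl ρ = (fs.map Prod.fst).toFinset := by
  induction hρ with
  | empty => exact ⟨[], TyEq.refl _, rfl⟩
  | fld l σ => exact ⟨[(l, σ)], (ofFields_singleton l σ).symm, rfl⟩
  | inter _ _ ih₁ ih₂ =>
    obtain ⟨fs, hfs, hlbl₁⟩ := ih₁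
    obtain ⟨gs, hgs, hlbl₂⟩ := ih₂
    refine ⟨fs ++ gs, (hfs.inter_congr hgs).trans (ofFields_append fs gs).symm, ?_⟩
    simp [lbl, hlbl₁, hlbl₂]
  | merge h₁ h₂ ih₁ ih₂ =>
    obtain ⟨fs, hfs, hlbl₁⟩ := ih₁
    obtain ⟨gs, hgs, hlbl₂⟩ := ih₂
    refine ⟨mergeFields fs gs, (TyEq.merge_congr h₁ (isRec_ofFields fs) h₂ (isRec_ofFields gs)
      hfs hgs).trans (merge_ofFields fs gs), ?_⟩
    ext l
    simp only [lbl, hlbl₁, hlbl₂, mergeFields, Finset.mem_union, List.mem_toFinset,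
      List.map_append, List.mem_append, List.mem_map, List.mem_filter]
    grind

end Ty

theorem TySub.merge_mono_r {ρ τ τ' : Ty} (hρ : IsRec ρ) (hτ : IsRec τ) (hτ' : IsRec τ')
    (h : TySub τ τ') (hlbl : lbl τ = lbl τ') : TySub (.merge ρ τ) (.merge ρ τ') := by
  obtain ⟨fs, hfs, -⟩ := Ty.exists_ofFields hρ
  obtain ⟨gs, hgs, hlbl₁⟩ := Ty.exists_ofFields hτ
  obtain ⟨gs', hgs', hlbl₂⟩ := Ty.exists_ofFields hτ'
  set kept := fs.filter (fun p => decide (p.1 ∉ gs.map Prod.fst))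
  have hkept : fs.filter (fun p => decide (p.1 ∉ gs'.map Prod.fst)) = kept := by
    refine List.filter_congr fun p _ => ?_
    rw [decide_eq_decide, ← List.mem_toFinset, ← hlbl₂, ← hlbl, hlbl₁, List.mem_toFinset]
  have hfields : TySub (Ty.ofFields (kept ++ gs)) (Ty.ofFields (kept ++ gs')) :=
    (Ty.ofFields_append kept gs).1.trans
      (((TySub.refl _).inter_mono (hgs.2.trans (h.trans hgs'.1))).trans
        (Ty.ofFields_append kept gs').2)
  have hleft := (TyEq.merge_congr hρ (Ty.isRec_ofFields fs) hτ (Ty.isRec_ofFields gs) hfs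
    hgs).trans (Ty.merge_ofFields fs gs)
  have hright := (TyEq.merge_congr hρ (Ty.isRec_ofFields fs) hτ' (Ty.isRec_ofFields gs') hfs
    hgs').trans (Ty.merge_ofFields fs gs')
  rw [Ty.mergeFields, hkept] at hright
  exact hleft.1.trans (hfields.trans hright.2)

def MergeGenerated (Γ : List Ty) (M : Tm) (R : List (Nat × Tm)) (σ : Ty) : Prop :=
  ∃ ρ₁ ρ₂ : Ty, IsRec ρ₁ ∧ IsRec ρ₂ ∧ Typing Γ M ρ₁ ∧ Typing Γ (.rcd R) ρ₂ ∧
    Tm.lblR R = lbl ρ₂ ∧ TySub (.merge ρ₁ ρ₂) σ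

namespace MergeGenerated

variable {Γ : List Ty} {M : Tm} {R : List (Nat × Tm)} {σ τ : Ty}

theorem mono (h : MergeGenerated Γ M R σ) (hστ : TySub σ τ) : MergeGenerated Γ M R τ :=
  let ⟨ρ₁, ρ₂, h₁, h₂, hM, hR, hlbl, hle⟩ := h
  ⟨ρ₁, ρ₂, h₁, h₂, hM, hR, hlbl, hle.trans hστ⟩

theorem inter (h : MergeGenerated Γ M R σ) (h' : MergeGenerated Γ M R τ) :
    MergeGenerated Γ M R (.inter σ τ) := by
  obtain ⟨ρ₁, ρ₂, h₁, h₂, hM, hR, hlbl, hle⟩ := h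
  obtain ⟨ρ₁', ρ₂', h₁', h₂', hM', hR', hlbl', hle'⟩ := h'
  have hρ₂ : IsRec (.inter ρ₂ ρ₂') := .inter h₂ h₂'
  have hlbl₂ : lbl (.inter ρ₂ ρ₂') = lbl ρ₂ := by simp [lbl, ← hlbl, ← hlbl']
  refine ⟨.inter ρ₁ ρ₁', .inter ρ₂ ρ₂', .inter h₁ h₁', hρ₂, .inter hM hM', .inter hR hR',
    hlbl.trans hlbl₂.symm, ?_⟩
  refine (TySub.merge_inter h₁ h₁' hρ₂).trans (TySub.inter_mono ?_ ?_)
  · exact (TySub.merge_mono_r h₁ hρ₂ h₂ (.inter_left _ _) hlbl₂).trans hle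
  · exact (TySub.merge_mono_r h₁' hρ₂ h₂' (.inter_right _ _)
      (hlbl₂.trans (hlbl.symm.trans hlbl'))).trans hle'

theorem of_typing {t : Tm} (h : Typing Γ t σ) (ht : t = .merge M R) :
    TySub .omega σ ∨ MergeGenerated Γ M R σ := by
  induction h with
  | var | lam | app | empty | rcd | sel => cases ht
  | omega => exact .inl (.refl _)
  | merge hM hR h₁ h₂ hlbl =>
    cases ht
    exact .inr ⟨_, _, h₁, h₂, hM, hR, hlbl, .refl _⟩
  | sub _ hστ ih =>
    exact (ih ht).imp (·.trans hστ) (·.mono hστ)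
  | inter _ _ ih ih' =>
    rcases ih ht with hω | hgen <;> rcases ih' ht with hω' | hgen'
    · exact .inl (.le_inter hω hω')
    · exact .inr ((hgen'.mono ((TySub.le_omega _).trans hω)).inter hgen')
    · exact .inr (hgen.inter (hgen.mono ((TySub.le_omega _).trans hω')))
    · exact .inr (hgen.inter hgen')

end MergeGenerated

/-- Generation lemma for record merge (for `σ` with `ω ≰ σ`). -/
theorem merge_generation (Γ : List Ty) (M : Tm) (R : List (Nat × Tm)) (σ : Ty)
    (hσ : ¬ TySub .omega σ) :
    Typing Γ (.merge M R) σ ↔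
      ∃ ρ₁ ρ₂ : Ty, IsRec ρ₁ ∧ IsRec ρ₂ ∧
        Typing Γ M ρ₁ ∧ Typing Γ (.rcd R) ρ₂ ∧
        Tm.lblR R = lbl ρ₂ ∧ TySub (.merge ρ₁ ρ₂) σ := by
  refine ⟨fun h => (MergeGenerated.of_typing h rfl).resolve_left hσ, ?_⟩
  rintro ⟨ρ₁, ρ₂, h₁, h₂, hM, hR, hlbl, hle⟩
  exact .sub (.merge hM hR h₁ h₂ hlbl) hle
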